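/- For every prime p > 3, the polynomial identity £^{OY}_{(1,1,1)}(t) = £^{OY}_{(1,1,1)}(1-t) holds in (ZMod p)[t], where £^{OY}_{(1,1,1)}(t) = \sum' t^{l_1+l_2+l_3}/(l_1(l_1+l_2)(l_1+l_2+l_3)). -/

import Mathlib

/-!
Since `0⁻¹ = 0` in `ZMod p`, the divisibility conditions in `OY111` can be dropped. Summing over
the six orderings of `(l₁, l₂, l₃)` and using, for nonzero `x, y, z`, that
`∑_σ 1 / (x_σ₁ (x_σ₁ + x_σ₂) (x + y + z))` equals `1 / (x y z)` up to terms supported where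
`x + y + z` or one of the pair sums vanishes, one gets
`6 £(u) = L(u)³ - c (uᵖ - u²ᵖ)`, where `L(t) = ∑ tˡ / l` is the truncated logarithm and
`c = ∑_{a+b+c=p} 1 / (a b c)`. The pair terms cancel because `∑ 1 / l² = 0` for `p > 3`, and the
triples with `a + b + c = 2p` are the reflections `l ↦ p - l` of those with `a + b + c = p`.
Finally `L(1 - t) = L(t)`, since the difference has zero derivative, degree `< p` and vanishes
at `t = 0` (as `∑ 1 / l = 0`), while `(1 - t)ᵖ = 1 - tᵖ` makes `uᵖ - u²ᵖ` symmetric too.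
-/

open Polynomial Finset

/-- £^OY_{(1,1,1)} with tˢ replaced by uˢ for a polynomial u. -/
noncomputable def OY111 (p : ℕ) (u : Polynomial (ZMod p)) : Polynomial (ZMod p) :=
  ∑ l1 ∈ Ico 1 p, ∑ l2 ∈ Ico 1 p, ∑ l3 ∈ Ico 1 p,
    if ¬ p ∣ l1 ∧ ¬ p ∣ (l1 + l2) ∧ ¬ p ∣ (l1 + l2 + l3) then
      C ((l1 : ZMod p)⁻¹ * ((l1 + l2 : ℕ) : ZMod p)⁻¹ * ((l1 + l2 + l3 : ℕ) : ZMod p)⁻¹)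
        * u ^ (l1 + l2 + l3)
    else 0

section FieldIdentity

variable {K : Type*} [Field K] [DecidableEq K]

theorem inv_partialSum_add_swap {a b c : K} (ha : a ≠ 0) (hb : b ≠ 0) (hc : c ≠ 0) :
    a⁻¹ * (a + b)⁻¹ * (a + b + c)⁻¹ + b⁻¹ * (b + a)⁻¹ * (b + a + c)⁻¹
      = (a * b * c)⁻¹ * (c * (a + b + c)⁻¹ - if a + b = 0 then 1 else 0) := by
  rw [add_comm b a]
  by_cases hab : a + b = 0
  · simp [hab, hc]
  · rw [if_neg hab]
    field_simp
    ring

theorem sum_perm_inv_partialSum {x y z : K} (hx : x ≠ 0) (hy : y ≠ 0) (hz : z ≠ 0) :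
    x⁻¹ * (x + y)⁻¹ * (x + y + z)⁻¹ + x⁻¹ * (x + z)⁻¹ * (x + z + y)⁻¹
      + y⁻¹ * (y + x)⁻¹ * (y + x + z)⁻¹ + y⁻¹ * (y + z)⁻¹ * (y + z + x)⁻¹
      + z⁻¹ * (z + x)⁻¹ * (z + x + y)⁻¹ + z⁻¹ * (z + y)⁻¹ * (z + y + x)⁻¹
      = (x * y * z)⁻¹ - (if x + y + z = 0 then (x * y * z)⁻¹ else 0)
        - (if x + y = 0 then (x * y * z)⁻¹ else 0) - (if x + z = 0 then (x * y * z)⁻¹ else 0)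
        - (if y + z = 0 then (x * y * z)⁻¹ else 0) := by
  have hs : (x * y * z)⁻¹ * ((x + y + z) * (x + y + z)⁻¹)
      = (x * y * z)⁻¹ - if x + y + z = 0 then (x * y * z)⁻¹ else 0 := by
    split_ifs with h <;> simp [h]
  have hxy := inv_partialSum_add_swap hx hy hz
  have hxz := inv_partialSum_add_swap hx hz hy
  have hyz := inv_partialSum_add_swap hy hz hx
  rw [mul_right_comm x z y] at hxz
  rw [show y * z * x = x * y * z by ring] at hyz
  simp only [mul_sub, mul_ite, mul_one, mul_zero] at hxy hxz hyz
  linear_combination hxy + hxz + hyz + hs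

end FieldIdentity

theorem Finset.sum_Ico_one_reflect {M : Type*} [AddCommMonoid M] (p : ℕ) (f : ℕ → M) :
    ∑ l ∈ Ico 1 p, f (p - l) = ∑ l ∈ Ico 1 p, f l := by
  rw [sum_Ico_reflect f 1 (Nat.le_succ p), Nat.add_sub_cancel_left, Nat.add_sub_cancel]

namespace ZMod

variable {p : ℕ}

theorem natCast_ne_zero_of_mem_Ico {l : ℕ} (hl : l ∈ Ico 1 p) : (l : ZMod p) ≠ 0 := by
  rw [mem_Ico] at hl
  rw [Ne, natCast_eq_zero_iff]
  exact fun h => (Nat.le_of_dvd hl.1 h).not_gt hl.2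

theorem natCast_sub_self {a : ℕ} (ha : a ≤ p) : ((p - a : ℕ) : ZMod p) = -a := by
  rw [Nat.cast_sub ha, natCast_self, zero_sub]

theorem natCast_add_eq_zero_iff {a b : ℕ} (ha : a ∈ Ico 1 p) (hb : b ∈ Ico 1 p) :
    (a : ZMod p) + b = 0 ↔ a + b = p := by
  rw [mem_Ico] at ha hb
  rw [← Nat.cast_add, natCast_eq_zero_iff]
  constructor
  · rintro ⟨k, hk⟩
    have : k < 2 := Nat.lt_of_mul_lt_mul_left (a := p) (by omega)
    interval_cases k <;> omega
  · intro h
    exact ⟨1, by omega⟩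

theorem natCast_add_add_eq_zero_iff {a b c : ℕ} (ha : a ∈ Ico 1 p) (hb : b ∈ Ico 1 p)
    (hc : c ∈ Ico 1 p) : (a : ZMod p) + b + c = 0 ↔ a + b + c = p ∨ a + b + c = 2 * p := by
  rw [mem_Ico] at ha hb hc
  rw [← Nat.cast_add, ← Nat.cast_add, natCast_eq_zero_iff]
  constructor
  · rintro ⟨k, hk⟩
    have : k < 3 := Nat.lt_of_mul_lt_mul_left (a := p) (by omega)
    interval_cases k <;> omega
  · rintro (h | h)
    exacts [⟨1, by omega⟩, ⟨2, by omega⟩]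

theorem sum_Ico_natCast [NeZero p] {M : Type*} [AddCommMonoid M] (f : ZMod p → M)
    (hf : f 0 = 0) :
    ∑ l ∈ Ico 1 p, f l = ∑ x, f x := by
  rw [← sum_erase univ hf]
  refine sum_nbij' (fun l => (l : ZMod p)) (fun x => x.val) ?_ ?_ ?_ ?_ fun _ _ => rfl
  · intro l hl
    simpa using natCast_ne_zero_of_mem_Ico hl
  · intro x hx
    simp only [mem_erase, mem_univ, and_true, ← val_ne_zero] at hx
    simpa [mem_Ico] using ⟨Nat.one_le_iff_ne_zero.mpr hx, val_lt x⟩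
  · intro l hl
    exact val_cast_of_lt (mem_Ico.mp hl).2
  · intro x _
    exact natCast_zmod_val x

variable [Fact p.Prime]

theorem sum_Ico_inv_pow {i : ℕ} (hi : 0 < i) (hip : i < p - 1) :
    ∑ l ∈ Ico 1 p, ((l : ZMod p)⁻¹) ^ i = 0 := by
  rw [sum_Ico_natCast (fun x => x⁻¹ ^ i) (by simp [hi.ne'])]
  rw [← FiniteField.sum_pow_lt_card_sub_one (K := ZMod p) i (by simpa using hip)]
  exact Equiv.sum_comp (Equiv.inv (ZMod p)) (· ^ i)

end ZMod

namespace Polynomial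

theorem eq_C_of_derivative_eq_zero_of_natDegree_lt {R : Type*} [CommRing R] [NoZeroDivisors R]
    {p : ℕ} [CharP R p] (hp : p ≠ 0) {f : R[X]} (hf : derivative f = 0) (hdeg : f.natDegree < p) :
    f = C (f.coeff 0) := by
  have h := natDegree_expand p (contract p f)
  rw [expand_contract p hf hp] at h
  have hcontract : (contract p f).natDegree = 0 := by
    by_contra hk
    have := Nat.le_mul_of_pos_left p (Nat.pos_of_ne_zero hk)
    omega
  exact eq_C_of_natDegree_eq_zero (by rw [h, hcontract, zero_mul])

theorem geom_sum_X_comp_one_sub {R : Type*} [CommRing R] [IsDomain R] {p : ℕ} [Fact p.Prime]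
    [CharP R p] :
    (∑ j ∈ range (p - 1), (X : R[X]) ^ j).comp (1 - X) = -∑ j ∈ range (p - 1), (X : R[X]) ^ j := by
  obtain ⟨n, rfl⟩ : ∃ n, p = n + 1 := ⟨p - 1, (Nat.sub_add_cancel (Fact.out : p.Prime).one_le).symm⟩
  have hfrob : (1 - X : R[X]) ^ (n + 1) = 1 - X ^ (n + 1) := by rw [sub_pow_char, one_pow]
  have h1 := geom_sum_mul (1 - X : R[X]) n
  have h2 := geom_sum_mul (X : R[X]) n
  have hX : (X * (X - 1) : R[X]) ≠ 0 := mul_ne_zero X_ne_zero (X_sub_C_ne_zero 1)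
  refine mul_left_cancel₀ hX ?_
  simp only [Nat.add_sub_cancel, sum_comp, pow_comp, X_comp]
  linear_combination (1 - X) * h1 + X * h2 + hfrob

end Polynomial

noncomputable def truncLog (p : ℕ) : (ZMod p)[X] :=
  ∑ l ∈ Ico 1 p, C (l : ZMod p)⁻¹ * X ^ l

section TruncLog

variable {p : ℕ} [Fact p.Prime]

theorem truncLog_comp (u : (ZMod p)[X]) :
    (truncLog p).comp u = ∑ l ∈ Ico 1 p, C (l : ZMod p)⁻¹ * u ^ l := by
  simp [truncLog]

theorem natDegree_truncLog_lt : (truncLog p).natDegree < p := by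
  have hp := (Fact.out : p.Prime).one_lt
  refine (natDegree_sum_le_of_forall_le _ _ (n := p - 1) fun l hl => ?_).trans_lt (by omega)
  refine (natDegree_C_mul_le _ _).trans ?_
  simp only [natDegree_X_pow]
  exact Nat.le_sub_one_of_lt (mem_Ico.mp hl).2

theorem derivative_truncLog :
    derivative (truncLog p) = ∑ j ∈ range (p - 1), (X : (ZMod p)[X]) ^ j := by
  rw [truncLog, derivative_sum, sum_Ico_eq_sum_range]
  refine sum_congr rfl fun j hj => ?_
  have hj : ((1 + j : ℕ) : ZMod p) ≠ 0 :=
    ZMod.natCast_ne_zero_of_mem_Ico (by simp only [mem_range, mem_Ico] at hj ⊢; omega)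
  rw [derivative_C_mul_X_pow, inv_mul_cancel₀ hj, C_1, one_mul, Nat.add_sub_cancel_left]

theorem truncLog_eval_zero : (truncLog p).eval 0 = 0 := by
  simp only [truncLog, eval_finsetSum, eval_mul, eval_C, eval_pow, eval_X]
  exact sum_eq_zero fun l hl => by simp [Nat.one_le_iff_ne_zero.mp (mem_Ico.mp hl).1]

theorem truncLog_eval_one (hp : 2 < p) : (truncLog p).eval 1 = 0 := by
  simpa [truncLog, eval_finsetSum] using ZMod.sum_Ico_inv_pow (p := p) one_pos (by omega)

theorem truncLog_comp_one_sub (hp : 2 < p) : (truncLog p).comp (1 - X) = truncLog p := by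
  set q := (truncLog p).comp (1 - X) - truncLog p with hq
  have hq' : derivative q = 0 := by
    rw [hq, derivative_sub, derivative_comp_one_sub_X, derivative_truncLog, geom_sum_X_comp_one_sub]
    ring
  have hdeg : q.natDegree < p := by
    refine (natDegree_sub_le _ _).trans_lt (max_lt ?_ natDegree_truncLog_lt)
    rw [natDegree_comp, show (1 - X : (ZMod p)[X]) = -(X - C 1) by simp, natDegree_neg,
      natDegree_X_sub_C, mul_one]
    exact natDegree_truncLog_lt
  have hq0 : q.coeff 0 = 0 := by
    rw [coeff_zero_eq_eval_zero, hq, eval_sub, eval_comp, eval_sub, eval_one, eval_X, sub_zero,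
      truncLog_eval_one hp, truncLog_eval_zero, sub_zero]
  rw [← sub_eq_zero, ← hq,
    eq_C_of_derivative_eq_zero_of_natDegree_lt (Fact.out : p.Prime).ne_zero hq' hdeg, hq0, C_0]

end TruncLog

section TripleSum

variable {p : ℕ} (u : (ZMod p)[X])

noncomputable def tripleSum (w : ZMod p → ZMod p → ZMod p → ZMod p) : (ZMod p)[X] :=
  ∑ a ∈ Ico 1 p, ∑ b ∈ Ico 1 p, ∑ c ∈ Ico 1 p, C (w a b c) * u ^ (a + b + c)

theorem tripleSum_add (w₁ w₂ : ZMod p → ZMod p → ZMod p → ZMod p) :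
    tripleSum u (fun x y z => w₁ x y z + w₂ x y z) = tripleSum u w₁ + tripleSum u w₂ := by
  simp only [tripleSum, map_add, add_mul, sum_add_distrib]

theorem tripleSum_sub (w₁ w₂ : ZMod p → ZMod p → ZMod p → ZMod p) :
    tripleSum u (fun x y z => w₁ x y z - w₂ x y z) = tripleSum u w₁ - tripleSum u w₂ := by
  simp only [tripleSum, map_sub, sub_mul, sum_sub_distrib]

theorem tripleSum_congr {w₁ w₂ : ZMod p → ZMod p → ZMod p → ZMod p}
    (h : ∀ x y z : ZMod p, x ≠ 0 → y ≠ 0 → z ≠ 0 → w₁ x y z = w₂ x y z) :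
    tripleSum u w₁ = tripleSum u w₂ :=
  sum_congr rfl fun _ ha => sum_congr rfl fun _ hb => sum_congr rfl fun _ hc => by
    rw [h _ _ _ (ZMod.natCast_ne_zero_of_mem_Ico ha) (ZMod.natCast_ne_zero_of_mem_Ico hb)
      (ZMod.natCast_ne_zero_of_mem_Ico hc)]

theorem tripleSum_comm12 (w : ZMod p → ZMod p → ZMod p → ZMod p) :
    tripleSum u (fun x y z => w y x z) = tripleSum u w := by
  rw [tripleSum, sum_comm]
  exact sum_congr rfl fun a _ => sum_congr rfl fun b _ => sum_congr rfl fun c _ => by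
    rw [add_comm b a]

theorem tripleSum_comm23 (w : ZMod p → ZMod p → ZMod p → ZMod p) :
    tripleSum u (fun x y z => w x z y) = tripleSum u w := by
  refine sum_congr rfl fun a _ => ?_
  rw [sum_comm]
  exact sum_congr rfl fun b _ => sum_congr rfl fun c _ => by rw [add_right_comm a c b]

theorem six_mul_tripleSum (w : ZMod p → ZMod p → ZMod p → ZMod p) :
    6 * tripleSum u w = tripleSum u fun x y z =>
      w x y z + w x z y + w y x z + w y z x + w z x y + w z y x := by
  simp only [tripleSum_add]
  rw [tripleSum_comm23 u w, tripleSum_comm12 u w,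
    tripleSum_comm12 u (fun x y z => w x z y), tripleSum_comm23 u w,
    tripleSum_comm12 u (fun x y z => w z x y), tripleSum_comm23 u (fun x y z => w y x z),
    tripleSum_comm12 u w]
  ring

variable [Fact p.Prime]

theorem tripleSum_inv_mul_mul :
    tripleSum u (fun x y z => (x * y * z)⁻¹) = ((truncLog p).comp u) ^ 3 := by
  rw [tripleSum, truncLog_comp, pow_three]
  simp only [sum_mul, mul_sum]
  refine sum_congr rfl fun a _ => sum_congr rfl fun b _ => sum_congr rfl fun c _ => ?_
  simp only [mul_inv, map_mul, pow_add]
  ring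

theorem tripleSum_ite_add_eq_zero (hp : 3 < p) :
    tripleSum u (fun x y z => if x + y = 0 then (x * y * z)⁻¹ else 0) = 0 := by
  have hcollapse : ∀ a ∈ Ico 1 p, ∀ c ∈ Ico 1 p,
      ∑ b ∈ Ico 1 p, C (if (a : ZMod p) + b = 0 then ((a : ZMod p) * b * c)⁻¹ else 0)
        * u ^ (a + b + c) = C (-((a : ZMod p)⁻¹ ^ 2)) * (C (c : ZMod p)⁻¹ * u ^ c) * u ^ p := by
    intro a ha c hc
    have hpa : p - a ∈ Ico 1 p := by simp only [mem_Ico] at ha ⊢; omega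
    rw [sum_eq_single_of_mem (p - a) hpa fun b hb hne => by
      rw [if_neg (mt (ZMod.natCast_add_eq_zero_iff ha hb).mp (by omega)), C_0, zero_mul]]
    rw [if_pos ((ZMod.natCast_add_eq_zero_iff ha hpa).mpr (by simp only [mem_Ico] at ha; omega)),
      ZMod.natCast_sub_self (mem_Ico.mp ha).2.le,
      show a + (p - a) + c = c + p by simp only [mem_Ico] at ha; omega]
    simp only [mul_inv, inv_neg, map_mul, map_neg, map_pow, pow_add]
    ring
  calc tripleSum u _
      = ∑ a ∈ Ico 1 p, ∑ c ∈ Ico 1 p,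
          C (-((a : ZMod p)⁻¹ ^ 2)) * (C (c : ZMod p)⁻¹ * u ^ c) * u ^ p := by
        refine sum_congr rfl fun a ha => ?_
        rw [sum_comm]
        exact sum_congr rfl fun c hc => hcollapse a ha c hc
    _ = -C (∑ a ∈ Ico 1 p, (a : ZMod p)⁻¹ ^ 2) * (truncLog p).comp u * u ^ p := by
        simp only [truncLog_comp, ← sum_mul, ← mul_sum, map_sum, map_neg, sum_neg_distrib]
    _ = 0 := by rw [ZMod.sum_Ico_inv_pow two_pos (by omega), C_0, neg_zero, zero_mul, zero_mul]

end TripleSum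

noncomputable def tripleInvSum (p n : ℕ) : ZMod p :=
  ∑ a ∈ Ico 1 p, ∑ b ∈ Ico 1 p, ∑ c ∈ Ico 1 p,
    if a + b + c = n then ((a : ZMod p) * b * c)⁻¹ else 0

section TripleInvSum

variable {p : ℕ} [Fact p.Prime]

theorem tripleInvSum_two_mul : tripleInvSum p (2 * p) = -tripleInvSum p p := by
  calc tripleInvSum p (2 * p)
      = ∑ a ∈ Ico 1 p, ∑ b ∈ Ico 1 p, ∑ c ∈ Ico 1 p,
          if (p - a) + (p - b) + (p - c) = 2 * p
          then (((p - a : ℕ) : ZMod p) * (p - b : ℕ) * (p - c : ℕ))⁻¹ else 0 := by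
        rw [tripleInvSum, ← sum_Ico_one_reflect p]
        refine sum_congr rfl fun a _ => ?_
        rw [← sum_Ico_one_reflect p]
        refine sum_congr rfl fun b _ => ?_
        rw [← sum_Ico_one_reflect p]
    _ = ∑ a ∈ Ico 1 p, ∑ b ∈ Ico 1 p, ∑ c ∈ Ico 1 p,
          -if a + b + c = p then ((a : ZMod p) * b * c)⁻¹ else 0 := by
        refine sum_congr rfl fun a ha => sum_congr rfl fun b hb => sum_congr rfl fun c hc => ?_
        simp only [mem_Ico] at ha hb hc
        rw [ZMod.natCast_sub_self ha.2.le, ZMod.natCast_sub_self hb.2.le,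
          ZMod.natCast_sub_self hc.2.le]
        by_cases h : a + b + c = p
        · rw [if_pos (by omega), if_pos h, neg_mul_neg, mul_neg, inv_neg]
        · rw [if_neg (by omega), if_neg h, neg_zero]
    _ = -tripleInvSum p p := by simp only [tripleInvSum, sum_neg_distrib]

theorem tripleSum_ite_add_add_eq_zero (u : (ZMod p)[X]) :
    tripleSum u (fun x y z => if x + y + z = 0 then (x * y * z)⁻¹ else 0)
      = C (tripleInvSum p p) * (u ^ p - u ^ (2 * p)) := by
  have hsplit : ∀ a ∈ Ico 1 p, ∀ b ∈ Ico 1 p, ∀ c ∈ Ico 1 p,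
      C (if (a : ZMod p) + b + c = 0 then ((a : ZMod p) * b * c)⁻¹ else 0) * u ^ (a + b + c)
        = C (if a + b + c = p then ((a : ZMod p) * b * c)⁻¹ else 0) * u ^ p
          + C (if a + b + c = 2 * p then ((a : ZMod p) * b * c)⁻¹ else 0) * u ^ (2 * p) := by
    intro a ha b hb c hc
    have hp := (Fact.out : p.Prime).pos
    simp only [ZMod.natCast_add_add_eq_zero_iff ha hb hc]
    by_cases h₁ : a + b + c = p
    · rw [if_pos (Or.inl h₁), if_pos h₁, if_neg (by omega), h₁, C_0, zero_mul, add_zero]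
    by_cases h₂ : a + b + c = 2 * p
    · rw [if_pos (Or.inr h₂), if_neg h₁, if_pos h₂, h₂, C_0, zero_mul, zero_add]
    · rw [if_neg (by tauto), if_neg h₁, if_neg h₂, C_0, zero_mul, zero_mul, zero_mul, add_zero]
  rw [tripleSum, sum_congr rfl fun a ha => sum_congr rfl fun b hb => sum_congr rfl fun c hc =>
    hsplit a ha b hb c hc]
  simp only [sum_add_distrib, ← sum_mul, ← map_sum]
  rw [← tripleInvSum, ← tripleInvSum, tripleInvSum_two_mul, map_neg]
  ring

end TripleInvSum

variable {p : ℕ}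

theorem OY111_eq_tripleSum (u : (ZMod p)[X]) :
    OY111 p u = tripleSum u (fun x y z => x⁻¹ * (x + y)⁻¹ * (x + y + z)⁻¹) := by
  refine sum_congr rfl fun a _ => sum_congr rfl fun b _ => sum_congr rfl fun c _ => ?_
  push_cast
  split_ifs with h
  · rfl
  · simp only [not_and_or, not_not, ← ZMod.natCast_eq_zero_iff] at h
    push_cast at h
    rcases h with h | h | h <;> simp [h, ZMod.inv_zero]

theorem six_mul_OY111 [Fact p.Prime] (hp : 3 < p) (u : (ZMod p)[X]) :
    6 * OY111 p u = ((truncLog p).comp u) ^ 3 - C (tripleInvSum p p) * (u ^ p - u ^ (2 * p)) := by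
  have hxz : tripleSum u (fun x y z => if x + z = 0 then (x * y * z)⁻¹ else 0) = 0 := by
    rw [← tripleSum_ite_add_eq_zero u hp, ← tripleSum_comm23]
    simp only [mul_right_comm]
  have hyz : tripleSum u (fun x y z => if y + z = 0 then (x * y * z)⁻¹ else 0) = 0 := by
    rw [← hxz, ← tripleSum_comm12]
    simp only [mul_comm]
  rw [OY111_eq_tripleSum, six_mul_tripleSum,
    tripleSum_congr u fun x y z hx hy hz => sum_perm_inv_partialSum hx hy hz]
  rw [tripleSum_sub, tripleSum_sub, tripleSum_sub, tripleSum_sub, tripleSum_inv_mul_mul,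
    tripleSum_ite_add_add_eq_zero, tripleSum_ite_add_eq_zero u hp, hxz, hyz]
  ring

theorem OY111_functional_equation (p : ℕ) (hp : p.Prime) (h3 : 3 < p) :
    OY111 p X = OY111 p (1 - X) := by
  have := Fact.mk hp
  have h6 : (6 : (ZMod p)[X]) ≠ 0 := by
    rw [← map_ofNat C 6, Ne, C_eq_zero, show (6 : ZMod p) = ((2 * 3 : ℕ) : ZMod p) by norm_num,
      ZMod.natCast_eq_zero_iff, hp.dvd_mul]
    rintro (h | h) <;> have := Nat.le_of_dvd (by norm_num) h <;> omega
  have hfrob : (1 - X : (ZMod p)[X]) ^ p = 1 - X ^ p := by rw [sub_pow_char, one_pow]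
  refine mul_left_cancel₀ h6 ?_
  rw [six_mul_OY111 h3, six_mul_OY111 h3, truncLog_comp_one_sub (by omega), comp_X, pow_mul',
    pow_mul', hfrob]
  ring
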